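/- Under the hypotheses of the stopping-time distribution lemma (0 ≤ u ≤ v integrable, g ≥ 0, and ∫_C (u - v_C)_+ dμ ≤ ∫_C g dμ for every element C of every partition ℂ_n), for any p ∈ (1,∞) one has ‖u‖_{L^p}^p ≤ N(p, N₀) ‖g‖_{L^p} ‖v‖_{L^p}^{p-1}, where N depends only on p and the regularity constant N₀ of the filtration. -/

import Mathlib

open MeasureTheory Filter
open scoped ENNReal Topology

/-- A filtration of partitions of a measure space `Ω`, with regularity constant `N₀`.
`part n` is the partition `ℂ_n`, consisting of countably many disjoint measurable sets
of finite positive measure; `elem n x` is the element `C_n(x)` of `ℂ_n` containing `x`.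
The partitions are nested, a parent has measure at most `N₀` times that of a child,
the elements become large as `n → -∞`, and the averages over `C_n(x)` converge a.e.
to the function as `n → ∞`. -/
structure FiltrationOfPartitions (Ω : Type) [MeasurableSpace Ω] (μ : Measure Ω)
    (N₀ : ℝ) where
  part : ℤ → Set (Set Ω)
  countable : ∀ n, (part n).Countable
  meas : ∀ n, ∀ C ∈ part n, MeasurableSet C
  finite : ∀ n, ∀ C ∈ part n, μ C < ⊤
  pos : ∀ n, ∀ C ∈ part n, 0 < μ C
  disj : ∀ n, (part n).PairwiseDisjoint id
  elem : ℤ → Ω → Set Ω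
  elem_mem : ∀ n x, elem n x ∈ part n ∧ x ∈ elem n x
  nested : ∀ n x, elem n x ⊆ elem (n - 1) x
  reg : ∀ n x, μ (elem (n - 1) x) ≤ ENNReal.ofReal N₀ * μ (elem n x)
  large : ∀ M : ℝ, ∃ m : ℤ, ∀ n : ℤ, n ≤ m → ∀ C ∈ part n, ENNReal.ofReal M ≤ μ C
  conv : ∀ f : Ω → ℝ, Integrable f μ →
    ∀ᵐ x ∂μ, Tendsto (fun n : ℤ => ⨍ y in elem n x, f y ∂μ) atTop (𝓝 (f x))

/-- The maximal function `Mv = sup_n v_{|n}` relative to a filtration of partitions. -/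
noncomputable def FiltrationOfPartitions.maximal {Ω : Type} [MeasurableSpace Ω]
    {μ : Measure Ω} {N₀ : ℝ} (F : FiltrationOfPartitions Ω μ N₀) (v : Ω → ℝ)
    (x : Ω) : ℝ≥0∞ :=
  ⨆ n : ℤ, ENNReal.ofReal (⨍ y in F.elem n x, v y ∂μ)

/-!
Stopping-time argument. For `s > 0`, the set `{Mv > s}` is the disjoint union of the maximal
cells `C` of the filtration on which the average `v_C` exceeds `s`; their parents have
average `≤ s`, so by regularity `s < v_C ≤ N₀ s`. Taking `s = λ / (2N₀)`, on such a cell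
`{u > λ} ⊆ {(u - v_C)_+ ≥ λ/2}`, and Chebyshev with the hypothesis gives
`μ{u > λ} ≤ (2/λ) ∫_{Mv > λ/(2N₀)} g` (using `u ≤ Mv` a.e. by the differentiation property).
The layer-cake formula turns this into `‖u‖_p^p ≲ ∫ g (Mv)^(p-1)`, Hölder bounds the right
side by `‖g‖_p ‖Mv‖_p^(p-1)`, and the same cells give `μ{Mv > s} ≤ (2/s) ∫_{v > s/2} v`,
whence `‖Mv‖_p ≲ ‖v‖_p` again by layer cake.
-/

open Set

section General

variable {α : Type*} [MeasurableSpace α] {μ : Measure α}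

lemma measure_sUnion_inter_le {𝒮 : Set (Set α)} (h𝒮 : 𝒮.Countable)
    (hd : 𝒮.PairwiseDisjoint id) (hm : ∀ C ∈ 𝒮, MeasurableSet C) (X : Set α)
    (f : α → ℝ≥0∞) (c : ℝ≥0∞) (h : ∀ C ∈ 𝒮, μ (C ∩ X) ≤ c * ∫⁻ x in C, f x ∂μ) :
    μ (⋃₀ 𝒮 ∩ X) ≤ c * ∫⁻ x in ⋃₀ 𝒮, f x ∂μ := by
  rw [sUnion_eq_biUnion, iUnion₂_inter, lintegral_biUnion h𝒮 hm hd, ← ENNReal.tsum_mul_left]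
  exact (measure_biUnion_le μ h𝒮 _).trans (ENNReal.tsum_le_tsum fun C => h C C.2)

lemma le_ofReal_inv_mul_of_ofReal_mul_le {r : ℝ} (hr : 0 < r) {a b : ℝ≥0∞}
    (h : ENNReal.ofReal r * a ≤ b) : a ≤ ENNReal.ofReal r⁻¹ * b := by
  rwa [ENNReal.ofReal_inv_of_pos hr, ← ENNReal.mul_le_iff_le_inv (by positivity)
    ENNReal.ofReal_ne_top]

lemma measure_inter_lt_le_of_integral_posPart_le {C : Set α} (hC : MeasurableSet C)
    (hCfin : μ C ≠ ⊤) {u g : α → ℝ} (hu : IntegrableOn u C μ) {c l : ℝ} (hl : 0 < l)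
    (hc : c ≤ l / 2) (h : ∫ x in C, max (u x - c) 0 ∂μ ≤ ∫ x in C, g x ∂μ) :
    μ (C ∩ {x | l < u x}) ≤ ENNReal.ofReal (l / 2)⁻¹ * ∫⁻ x in C, ‖g x‖ₑ ∂μ := by
  set f := fun x => max (u x - c) 0
  have hf : IntegrableOn f C μ := (hu.sub (integrableOn_const hCfin)).pos_part
  refine le_ofReal_inv_mul_of_ofReal_mul_le (by positivity) ?_
  calc ENNReal.ofReal (l / 2) * μ (C ∩ {x | l < u x})
      ≤ ENNReal.ofReal (l / 2) *
          μ.restrict C {x | ENNReal.ofReal (l / 2) ≤ ENNReal.ofReal (f x)} := by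
        rw [Measure.restrict_apply' hC, inter_comm]
        gcongr with x
        exact fun hx => ENNReal.ofReal_le_ofReal ((by linarith : l / 2 ≤ u x - c).trans
          (le_max_left _ _))
    _ ≤ ∫⁻ x in C, ENNReal.ofReal (f x) ∂μ :=
        mul_meas_ge_le_lintegral₀ hf.aemeasurable.ennreal_ofReal _
    _ = ENNReal.ofReal (∫ x in C, f x ∂μ) :=
        (ofReal_integral_eq_lintegral_ofReal hf (.of_forall fun _ => le_max_right _ _)).symm
    _ ≤ ‖∫ x in C, g x ∂μ‖ₑ := (ENNReal.ofReal_le_ofReal h).trans (Real.ofReal_le_enorm _)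
    _ ≤ ∫⁻ x in C, ‖g x‖ₑ ∂μ := enorm_integral_le_lintegral_enorm _

-- Since `v ≤ v • 1_{v > s/2} + s/2`, the second term absorbs half of `s μ C < ∫_C v`.
lemma measure_le_of_lt_setAverage {C : Set α} (hCfin : μ C ≠ ⊤) {v : α → ℝ}
    (hv : IntegrableOn v C μ) (hv0 : ∀ x, 0 ≤ v x) {s : ℝ} (hs : 0 < s)
    (h : s < ⨍ x in C, v x ∂μ) :
    μ C ≤ ENNReal.ofReal (s / 2)⁻¹ *
      ∫⁻ x in C, {x | s / 2 < v x}.indicator (fun x => ENNReal.ofReal (v x)) x ∂μ := by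
  set I := ∫⁻ x in C, {x | s / 2 < v x}.indicator (fun x => ENNReal.ofReal (v x)) x ∂μ
  have hpos : 0 < μ.real C := by
    by_contra! h0
    rw [setAverage_eq, le_antisymm h0 measureReal_nonneg, inv_zero, zero_smul] at h
    exact hs.not_gt h
  have hsplit : ∀ x, ENNReal.ofReal (v x) ≤
      {x | s / 2 < v x}.indicator (fun x => ENNReal.ofReal (v x)) x + ENNReal.ofReal (s / 2) := by
    intro x
    by_cases hx : s / 2 < v x
    · simp [hx]
    · simpa [hx] using ENNReal.ofReal_le_ofReal (le_of_not_gt hx)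
  refine le_ofReal_inv_mul_of_ofReal_mul_le (by positivity) (le_of_lt ?_)
  rw [← ENNReal.add_lt_add_iff_right (by finiteness : ENNReal.ofReal (s / 2) * μ C ≠ ⊤)]
  calc ENNReal.ofReal (s / 2) * μ C + ENNReal.ofReal (s / 2) * μ C
      = ENNReal.ofReal (s * μ.real C) := by
        rw [← add_mul, ← ENNReal.ofReal_add (by positivity) (by positivity), add_halves,
          ENNReal.ofReal_mul hs.le, measureReal_def, ENNReal.ofReal_toReal hCfin]
    _ < ENNReal.ofReal (∫ x in C, v x ∂μ) := by
        rw [setAverage_eq, smul_eq_mul, lt_inv_mul_iff₀ hpos, mul_comm] at h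
        exact (ENNReal.ofReal_lt_ofReal_iff (by linarith [mul_pos hs hpos])).2 h
    _ = ∫⁻ x in C, ENNReal.ofReal (v x) ∂μ :=
        ofReal_integral_eq_lintegral_ofReal hv (.of_forall hv0)
    _ ≤ ∫⁻ x in C, ({x | s / 2 < v x}.indicator (fun x => ENNReal.ofReal (v x)) x +
          ENNReal.ofReal (s / 2)) ∂μ := lintegral_mono hsplit
    _ = I + ENNReal.ofReal (s / 2) * μ C := by
        rw [lintegral_add_right _ measurable_const, setLIntegral_const, mul_comm]

lemma lintegral_rpow_le_of_measure_lt_le [SFinite μ] {f h : α → ℝ} {w : α → ℝ≥0∞}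
    (hf : AEMeasurable f μ) (hf0 : ∀ x, 0 ≤ f x) (hh : AEMeasurable h μ) (hh0 : ∀ x, 0 ≤ h x)
    (hw : AEMeasurable w μ) {A p : ℝ} (hA : 0 ≤ A) (hp : 1 < p)
    (hdist : ∀ t > 0, μ {x | t < f x} ≤ ENNReal.ofReal (A * t⁻¹) * ∫⁻ x in {x | t < h x}, w x ∂μ) :
    ∫⁻ x, ENNReal.ofReal (f x ^ p) ∂μ ≤
      ENNReal.ofReal (p * A / (p - 1)) * ∫⁻ x, w x * ENNReal.ofReal (h x ^ (p - 1)) ∂μ := by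
  set ν := μ.withDensity w
  set J := ∫⁻ t in Ioi (0 : ℝ), ν {x | t < h x} * ENNReal.ofReal (t ^ (p - 1 - 1))
  have hp0 : 0 < p := by linarith
  have hp1 : 0 < p - 1 := by linarith
  have hpoint : ∀ t ∈ Ioi (0 : ℝ), μ {x | t < f x} * ENNReal.ofReal (t ^ (p - 1)) ≤
      ENNReal.ofReal A * (ν {x | t < h x} * ENNReal.ofReal (t ^ (p - 1 - 1))) := by
    intro t (ht : 0 < t)
    rw [withDensity_apply', Real.rpow_sub_one ht.ne' (p - 1), div_eq_inv_mul,
      ENNReal.ofReal_mul (inv_nonneg.2 ht.le)]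
    calc μ {x | t < f x} * ENNReal.ofReal (t ^ (p - 1))
        ≤ ENNReal.ofReal A * ENNReal.ofReal t⁻¹ * (∫⁻ x in {x | t < h x}, w x ∂μ) *
            ENNReal.ofReal (t ^ (p - 1)) := by
          gcongr
          rw [← ENNReal.ofReal_mul hA]
          exact hdist t ht
      _ = _ := by ring
  have hlayer : ∫⁻ x, ENNReal.ofReal (h x ^ (p - 1)) ∂ν = ENNReal.ofReal (p - 1) * J :=
    lintegral_rpow_eq_lintegral_meas_lt_mul ν (.of_forall hh0)
      (hh.mono_ac (withDensity_absolutelyContinuous μ w)) hp1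
  calc ∫⁻ x, ENNReal.ofReal (f x ^ p) ∂μ
      = ENNReal.ofReal p *
          ∫⁻ t in Ioi (0 : ℝ), μ {x | t < f x} * ENNReal.ofReal (t ^ (p - 1)) :=
        lintegral_rpow_eq_lintegral_meas_lt_mul μ (.of_forall hf0) hf hp0
    _ ≤ ENNReal.ofReal p * (ENNReal.ofReal A * J) := by
        gcongr ENNReal.ofReal p * ?_
        simp only [J]
        rw [← lintegral_const_mul' _ _ ENNReal.ofReal_ne_top]
        exact setLIntegral_mono' measurableSet_Ioi hpoint
    _ = ENNReal.ofReal (p * A / (p - 1)) * (ENNReal.ofReal (p - 1) * J) := by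
        rw [← mul_assoc, ← mul_assoc, ← ENNReal.ofReal_mul hp0.le,
          ← ENNReal.ofReal_mul (by positivity), div_mul_cancel₀ _ hp1.ne']
    _ = ENNReal.ofReal (p * A / (p - 1)) * ∫⁻ x, w x * ENNReal.ofReal (h x ^ (p - 1)) ∂μ := by
        rw [← hlayer, lintegral_withDensity_eq_lintegral_mul₀ hw
          (hh.pow_const _).ennreal_ofReal]
        rfl

lemma eLpNorm_ofReal_eq_lintegral {p : ℝ} (hp : 0 < p) (f : α → ℝ) :
    eLpNorm f (ENNReal.ofReal p) μ = (∫⁻ x, ‖f x‖ₑ ^ p ∂μ) ^ p⁻¹ := by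
  rw [eLpNorm_eq_lintegral_rpow_enorm_toReal (by simpa using hp) ENNReal.ofReal_ne_top,
    ENNReal.toReal_ofReal hp.le, one_div]

lemma eLpNorm_ofReal_rpow_eq_lintegral {p : ℝ} (hp : 0 < p) {f : α → ℝ} (hf : ∀ x, 0 ≤ f x) :
    eLpNorm f (ENNReal.ofReal p) μ ^ p = ∫⁻ x, ENNReal.ofReal (f x ^ p) ∂μ := by
  rw [eLpNorm_ofReal_eq_lintegral hp, ← ENNReal.rpow_mul, inv_mul_cancel₀ hp.ne',
    ENNReal.rpow_one]
  congr with x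
  rw [Real.enorm_eq_ofReal (hf x), ENNReal.ofReal_rpow_of_nonneg (hf x) hp.le]

lemma lintegral_enorm_mul_rpow_le {f φ : α → ℝ} (hf : AEMeasurable f μ) (hφ : AEMeasurable φ μ)
    (hφ0 : ∀ x, 0 ≤ φ x) {p : ℝ} (hp : 1 < p) :
    ∫⁻ x, ‖f x‖ₑ * ENNReal.ofReal (φ x ^ (p - 1)) ∂μ ≤
      eLpNorm f (ENNReal.ofReal p) μ * (∫⁻ x, ENNReal.ofReal (φ x ^ p) ∂μ) ^ ((p - 1) / p) := by
  have hp0 : 0 < p := by linarith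
  have hpq : p.HolderConjugate (p / (p - 1)) := .conjExponent hp
  have hpow : ∀ x, ENNReal.ofReal (φ x ^ (p - 1)) ^ (p / (p - 1)) = ENNReal.ofReal (φ x ^ p) := by
    intro x
    rw [ENNReal.ofReal_rpow_of_nonneg (Real.rpow_nonneg (hφ0 x) _) (by positivity),
      ← Real.rpow_mul (hφ0 x), mul_div_cancel₀ _ (by linarith)]
  have := ENNReal.lintegral_mul_le_Lp_mul_Lq μ hpq hf.enorm (hφ.pow_const (p - 1)).ennreal_ofReal
  simp only [Pi.mul_apply, hpow, one_div, inv_div] at this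
  rwa [eLpNorm_ofReal_eq_lintegral hp0]

end General

namespace FiltrationOfPartitions

variable {Ω : Type} [MeasurableSpace Ω] {μ : Measure Ω} {N₀ : ℝ}
  (F : FiltrationOfPartitions Ω μ N₀) {v : Ω → ℝ} {s p : ℝ}

lemma elem_eq_of_mem {n : ℤ} {C : Set Ω} {x : Ω} (hC : C ∈ F.part n) (hx : x ∈ C) :
    F.elem n x = C := by
  by_contra h
  exact disjoint_left.1 (F.disj n (F.elem_mem n x).1 hC h) (F.elem_mem n x).2 hx

lemma elem_antitone (x : Ω) : Antitone (F.elem · x) :=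
  antitone_int_of_succ_le fun n => by simpa using F.nested (n + 1) x

lemma elem_eq_of_mem_elem {k n : ℤ} (hk : k ≤ n) {x z : Ω} (hz : z ∈ F.elem n x) :
    F.elem k z = F.elem k x :=
  F.elem_eq_of_mem (F.elem_mem k x).1 (F.elem_antitone x hk hz)

lemma measurable_comp_elem (n : ℤ) {β : Type*} [MeasurableSpace β] (h : Set Ω → β) :
    Measurable fun x => h (F.elem n x) := by
  intro S _
  have : (fun x => h (F.elem n x)) ⁻¹' S = ⋃ C ∈ {C | C ∈ F.part n ∧ h C ∈ S}, C := by
    ext x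
    simp only [mem_preimage, mem_iUnion, mem_ofPred_eq, exists_prop]
    constructor
    · exact fun hx => ⟨F.elem n x, ⟨(F.elem_mem n x).1, hx⟩, (F.elem_mem n x).2⟩
    · rintro ⟨C, ⟨hC, hCS⟩, hxC⟩
      rwa [F.elem_eq_of_mem hC hxC]
  rw [this]
  exact .biUnion ((F.countable n).mono fun C hC => hC.1) fun C hC => F.meas n C hC.1

lemma measurable_maximal (v : Ω → ℝ) : Measurable (F.maximal v) :=
  .iSup fun n => F.measurable_comp_elem n fun C => ENNReal.ofReal (⨍ y in C, v y ∂μ)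

lemma setAverage_elem_le (hv : Integrable v μ) (hv0 : ∀ x, 0 ≤ v x)
    (hN₀ : 0 ≤ N₀) (n : ℤ) (x : Ω) :
    ⨍ y in F.elem n x, v y ∂μ ≤ N₀ * ⨍ y in F.elem (n - 1) x, v y ∂μ := by
  set C := F.elem n x
  set P := F.elem (n - 1) x
  have hCC := (F.elem_mem n x).1
  have hPP := (F.elem_mem (n - 1) x).1
  have hC : 0 < μ.real C := ENNReal.toReal_pos (F.pos n C hCC).ne' (F.finite n C hCC).ne
  have hP : 0 < μ.real P :=
    ENNReal.toReal_pos (F.pos (n - 1) P hPP).ne' (F.finite (n - 1) P hPP).ne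
  have hreg : μ.real P ≤ N₀ * μ.real C := by
    have := ENNReal.toReal_mono (ENNReal.mul_ne_top ENNReal.ofReal_ne_top (F.finite n C hCC).ne)
      (F.reg n x)
    rwa [ENNReal.toReal_mul, ENNReal.toReal_ofReal hN₀] at this
  have hint : ∫ y in C, v y ∂μ ≤ ∫ y in P, v y ∂μ :=
    setIntegral_mono_set hv.integrableOn (.of_forall hv0) (F.nested n x).eventuallyLE
  have hP_avg : 0 ≤ ⨍ y in P, v y ∂μ := by
    rw [setAverage_eq, smul_eq_mul]; exact mul_nonneg (by positivity) (integral_nonneg hv0)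
  rw [setAverage_eq, smul_eq_mul, inv_mul_le_iff₀ hC]
  calc ∫ y in C, v y ∂μ ≤ μ.real P * ⨍ y in P, v y ∂μ := by
        rwa [setAverage_eq, smul_eq_mul, ← mul_assoc, mul_inv_cancel₀ hP.ne', one_mul]
    _ ≤ N₀ * μ.real C * ⨍ y in P, v y ∂μ := by gcongr
    _ = μ.real C * (N₀ * ⨍ y in P, v y ∂μ) := by ring

lemma exists_setAverage_elem_le (hv : Integrable v μ) (hv0 : ∀ x, 0 ≤ v x) (hs : 0 < s) :
    ∃ m : ℤ, ∀ n ≤ m, ∀ x, ⨍ y in F.elem n x, v y ∂μ ≤ s := by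
  obtain ⟨m, hm⟩ := F.large ((∫ y, v y ∂μ) / s)
  refine ⟨m, fun n hn x => ?_⟩
  have hC := (F.elem_mem n x).1
  have hfin := (F.finite n _ hC).ne
  have hpos : 0 < μ.real (F.elem n x) := ENNReal.toReal_pos (F.pos n _ hC).ne' hfin
  have hlarge : (∫ y, v y ∂μ) / s ≤ μ.real (F.elem n x) :=
    (ENNReal.ofReal_le_iff_le_toReal hfin).1 (hm n hn _ hC)
  rw [setAverage_eq, smul_eq_mul, inv_mul_le_iff₀ hpos]
  calc ∫ y in F.elem n x, v y ∂μ ≤ ∫ y, v y ∂μ := setIntegral_le_integral hv (.of_forall hv0)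
    _ ≤ μ.real (F.elem n x) * s := by rwa [div_le_iff₀ hs] at hlarge

variable (v s) in
def IsStoppingLevel (x : Ω) (n : ℤ) : Prop :=
  s < ⨍ y in F.elem n x, v y ∂μ ∧ ∀ k < n, ⨍ y in F.elem k x, v y ∂μ ≤ s

section Stopping

variable {F}

lemma IsStoppingLevel.eq {x : Ω} {n m : ℤ} (hn : F.IsStoppingLevel v s x n)
    (hm : F.IsStoppingLevel v s x m) : n = m := by
  by_contra hne
  rcases lt_or_gt_of_ne hne with h | h
  · exact (hm.2 n h).not_gt hn.1
  · exact (hn.2 m h).not_gt hm.1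

lemma IsStoppingLevel.of_mem_elem {x z : Ω} {n : ℤ} (hn : F.IsStoppingLevel v s x n)
    (hz : z ∈ F.elem n x) : F.IsStoppingLevel v s z n := by
  refine ⟨?_, fun k hk => ?_⟩
  · rw [F.elem_eq_of_mem_elem le_rfl hz]; exact hn.1
  · rw [F.elem_eq_of_mem_elem hk.le hz]; exact hn.2 k hk

lemma exists_isStoppingLevel (hv : Integrable v μ) (hv0 : ∀ x, 0 ≤ v x) (hs : 0 < s) {x : Ω}
    (hx : ENNReal.ofReal s < F.maximal v x) : ∃ n, F.IsStoppingLevel v s x n := by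
  obtain ⟨n, hn⟩ : ∃ n, s < ⨍ y in F.elem n x, v y ∂μ := by
    obtain ⟨n, hn⟩ := lt_iSup_iff.1 hx
    exact ⟨n, (ENNReal.ofReal_lt_ofReal_iff_of_nonneg hs.le).1 hn⟩
  obtain ⟨m, hm⟩ := F.exists_setAverage_elem_le hv hv0 hs
  have hbdd : ∀ k, s < ⨍ y in F.elem k x, v y ∂μ → m < k :=
    fun k hk => lt_of_not_ge fun hkm => (hm k hkm x).not_gt hk
  obtain ⟨n₀, hn₀, hmin⟩ := Int.exists_least_of_bdd ⟨m + 1, fun k hk => hbdd k hk⟩ ⟨n, hn⟩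
  exact ⟨n₀, hn₀, fun k hk => le_of_not_gt fun h => (hmin k h).not_gt hk⟩

variable (F v s) in
def stoppingCells : Set (Set Ω) :=
  {C | ∃ x n, F.IsStoppingLevel v s x n ∧ F.elem n x = C}

lemma countable_stoppingCells : (F.stoppingCells v s).Countable :=
  (countable_iUnion F.countable).mono fun _ ⟨x, n, _, hC⟩ =>
    mem_iUnion.2 ⟨n, hC ▸ (F.elem_mem n x).1⟩

lemma pairwiseDisjoint_stoppingCells : (F.stoppingCells v s).PairwiseDisjoint id := by
  rintro _ ⟨x, n, hn, rfl⟩ _ ⟨y, m, hm, rfl⟩ hne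
  refine disjoint_left.2 fun z hzx hzy => hne ?_
  obtain rfl : n = m := (hn.of_mem_elem hzx).eq (hm.of_mem_elem hzy)
  rw [← F.elem_eq_of_mem_elem le_rfl hzx, F.elem_eq_of_mem_elem le_rfl hzy]

lemma sUnion_stoppingCells (hv : Integrable v μ) (hv0 : ∀ x, 0 ≤ v x) (hs : 0 < s) :
    ⋃₀ F.stoppingCells v s = {x | ENNReal.ofReal s < F.maximal v x} := by
  ext z
  constructor
  · rintro ⟨_, ⟨x, n, hn, rfl⟩, hz⟩
    exact ((ENNReal.ofReal_lt_ofReal_iff_of_nonneg hs.le).2 (hn.of_mem_elem hz).1).trans_le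
      (le_iSup (fun k => ENNReal.ofReal (⨍ y in F.elem k z, v y ∂μ)) n)
  · intro hz
    obtain ⟨n, hn⟩ := exists_isStoppingLevel hv hv0 hs hz
    exact ⟨F.elem n z, ⟨z, n, hn, rfl⟩, (F.elem_mem n z).2⟩

lemma mem_part_of_mem_stoppingCells {C : Set Ω} (hC : C ∈ F.stoppingCells v s) :
    ∃ n, C ∈ F.part n := by
  obtain ⟨x, n, -, rfl⟩ := hC
  exact ⟨n, (F.elem_mem n x).1⟩

lemma lt_setAverage_of_mem_stoppingCells {C : Set Ω} (hC : C ∈ F.stoppingCells v s) :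
    s < ⨍ y in C, v y ∂μ := by
  obtain ⟨x, n, hn, rfl⟩ := hC
  exact hn.1

lemma setAverage_le_of_mem_stoppingCells (hv : Integrable v μ) (hv0 : ∀ x, 0 ≤ v x)
    (hN₀ : 0 ≤ N₀) {C : Set Ω} (hC : C ∈ F.stoppingCells v s) :
    ⨍ y in C, v y ∂μ ≤ N₀ * s := by
  obtain ⟨x, n, hn, rfl⟩ := hC
  exact (F.setAverage_elem_le hv hv0 hN₀ n x).trans
    (mul_le_mul_of_nonneg_left (hn.2 (n - 1) (by omega)) hN₀)

lemma measurableSet_of_mem_stoppingCells {C : Set Ω} (hC : C ∈ F.stoppingCells v s) :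
    MeasurableSet C := by
  obtain ⟨n, hn⟩ := mem_part_of_mem_stoppingCells hC
  exact F.meas n C hn

end Stopping

lemma measure_ofReal_lt_maximal_le (hv : Integrable v μ) (hv0 : ∀ x, 0 ≤ v x) (hs : 0 < s) :
    μ {x | ENNReal.ofReal s < F.maximal v x} ≤ ENNReal.ofReal (s / 2)⁻¹ *
      ∫⁻ x, {x | s / 2 < v x}.indicator (fun x => ENNReal.ofReal (v x)) x ∂μ := by
  rw [← sUnion_stoppingCells hv hv0 hs, ← inter_univ (⋃₀ _)]
  refine (measure_sUnion_inter_le countable_stoppingCells pairwiseDisjoint_stoppingCells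
    (fun C => F.measurableSet_of_mem_stoppingCells) univ _ _ fun C hC => ?_).trans
    (by gcongr; exact Measure.restrict_le_self)
  obtain ⟨n, hn⟩ := mem_part_of_mem_stoppingCells hC
  rw [inter_univ]
  exact measure_le_of_lt_setAverage (F.finite n C hn).ne hv.integrableOn hv0 hs
    (lt_setAverage_of_mem_stoppingCells hC)

lemma ae_maximal_lt_top (hv : Integrable v μ) (hv0 : ∀ x, 0 ≤ v x) :
    ∀ᵐ x ∂μ, F.maximal v x < ⊤ := by
  set K := ∫⁻ x, ENNReal.ofReal (v x) ∂μ
  have hK : K ≠ ⊤ := by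
    simp [K, ← ofReal_integral_eq_lintegral_ofReal hv (.of_forall hv0)]
  have hbound : ∀ s > 0, μ {x | F.maximal v x = ⊤} ≤ ENNReal.ofReal (s / 2)⁻¹ * K := by
    intro s hs
    refine (measure_mono fun x (hx : F.maximal v x = ⊤) => ?_).trans
      ((F.measure_ofReal_lt_maximal_le hv hv0 hs).trans ?_)
    · simp [mem_ofPred_eq, hx]
    · gcongr
      exact lintegral_mono (indicator_le_self _ _)
  have hlim : Tendsto (fun s : ℝ => ENNReal.ofReal (s / 2)⁻¹ * K) atTop (𝓝 0) := by
    simpa using ENNReal.Tendsto.mul_const (ENNReal.tendsto_ofReal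
      (tendsto_inv_atTop_zero.comp (tendsto_id.atTop_div_const two_pos))) (.inr hK)
  have hzero : μ {x | F.maximal v x = ⊤} = 0 :=
    le_antisymm (ge_of_tendsto hlim ((eventually_gt_atTop 0).mono hbound)) zero_le
  simpa [ae_iff, lt_top_iff_ne_top] using hzero

lemma ae_ofReal_le_maximal {u : Ω → ℝ} (hu : Integrable u μ) (hv : Integrable v μ)
    (huv : ∀ x, u x ≤ v x) : ∀ᵐ x ∂μ, ENNReal.ofReal (u x) ≤ F.maximal v x := by
  filter_upwards [F.conv u hu] with x hx
  refine le_of_tendsto (ENNReal.tendsto_ofReal hx) (.of_forall fun n => ?_)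
  refine le_trans ?_ (le_iSup (fun n => ENNReal.ofReal (⨍ y in F.elem n x, v y ∂μ)) n)
  gcongr ENNReal.ofReal ?_
  rw [setAverage_eq, setAverage_eq, smul_eq_mul, smul_eq_mul]
  exact mul_le_mul_of_nonneg_left (integral_mono hu.integrableOn hv.integrableOn huv)
    (by positivity)

lemma measure_lt_le_lintegral_maximal (hN₀ : 1 ≤ N₀) {u g : Ω → ℝ} (hu : Integrable u μ)
    (hv : Integrable v μ) (hv0 : ∀ x, 0 ≤ v x) (huv : ∀ x, u x ≤ v x)
    (hmain : ∀ n : ℤ, ∀ C ∈ F.part n,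
      ∫ x in C, max (u x - ⨍ y in C, v y ∂μ) 0 ∂μ ≤ ∫ x in C, g x ∂μ)
    {l : ℝ} (hl : 0 < l) :
    μ {x | l < u x} ≤ ENNReal.ofReal (l / 2)⁻¹ *
      ∫⁻ x in {x | ENNReal.ofReal (l / (2 * N₀)) < F.maximal v x}, ‖g x‖ₑ ∂μ := by
  set s := l / (2 * N₀)
  have hs : 0 < s := by positivity
  have hsl : s < l := div_lt_self hl (by linarith)
  have hlevel : {x | l < u x} ≤ᵐ[μ] (⋃₀ F.stoppingCells v s ∩ {x | l < u x} : Set Ω) := by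
    filter_upwards [F.ae_ofReal_le_maximal hu hv huv] with x hx hlx
    rw [sUnion_stoppingCells hv hv0 hs]
    exact ⟨((ENNReal.ofReal_lt_ofReal_iff_of_nonneg hs.le).2 (hsl.trans hlx)).trans_le hx, hlx⟩
  rw [← sUnion_stoppingCells hv hv0 hs]
  refine (measure_mono_ae hlevel).trans (measure_sUnion_inter_le countable_stoppingCells
    pairwiseDisjoint_stoppingCells (fun C => F.measurableSet_of_mem_stoppingCells) _ _ _
    fun C hC => ?_)
  obtain ⟨n, hn⟩ := mem_part_of_mem_stoppingCells hC
  refine measure_inter_lt_le_of_integral_posPart_le (F.meas n C hn) (F.finite n C hn).ne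
    hu.integrableOn hl ?_ (hmain n C hn)
  calc ⨍ y in C, v y ∂μ ≤ N₀ * s :=
        setAverage_le_of_mem_stoppingCells hv hv0 (by linarith) hC
    _ = l / 2 := by simp only [s]; field_simp

section SFinite

variable [SFinite μ]

lemma lintegral_maximal_rpow_le (hv : Integrable v μ) (hv0 : ∀ x, 0 ≤ v x) (hp : 1 < p) :
    ∫⁻ x, ENNReal.ofReal ((F.maximal v x).toReal ^ p) ∂μ ≤
      ENNReal.ofReal (p * 2 / (p - 1) * 2 ^ (p - 1)) * ∫⁻ x, ENNReal.ofReal (v x ^ p) ∂μ := by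
  refine (lintegral_rpow_le_of_measure_lt_le (F.measurable_maximal v).ennreal_toReal.aemeasurable
    (fun _ => ENNReal.toReal_nonneg) (hv.aemeasurable.const_mul 2) (fun x => by linarith [hv0 x])
    hv.aemeasurable.ennreal_ofReal zero_le_two hp fun t ht => ?_).trans_eq ?_
  · have hlevel : {x | t < 2 * v x} = {x | t / 2 < v x} := by
      ext x; simp only [mem_ofPred_eq]; constructor <;> intro <;> linarith
    calc μ {x | t < (F.maximal v x).toReal}
        ≤ μ {x | ENNReal.ofReal t < F.maximal v x} := measure_mono fun x (hx : t < _) =>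
          ((ENNReal.ofReal_lt_ofReal_iff (ht.trans hx)).2 hx).trans_le ENNReal.ofReal_toReal_le
      _ ≤ _ := F.measure_ofReal_lt_maximal_le hv hv0 ht
      _ = _ := by
        rw [lintegral_indicator₀ (nullMeasurableSet_lt aemeasurable_const hv.aemeasurable),
          hlevel, inv_div, div_eq_mul_inv]
  · rw [ENNReal.ofReal_mul (by positivity), mul_assoc]
    congr 1
    rw [← lintegral_const_mul' _ _ ENNReal.ofReal_ne_top]
    refine lintegral_congr fun x => ?_
    rw [← ENNReal.ofReal_mul (hv0 x), ← ENNReal.ofReal_mul (by positivity),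
      Real.mul_rpow zero_le_two (hv0 x), mul_left_comm,
      ← Real.rpow_one_add' (hv0 x) (by linarith), add_sub_cancel]

lemma lintegral_rpow_le_lintegral_enorm_mul_maximal (hN₀ : 1 ≤ N₀) {u g : Ω → ℝ}
    (hu : Integrable u μ) (hu0 : ∀ x, 0 ≤ u x) (hv : Integrable v μ) (hv0 : ∀ x, 0 ≤ v x)
    (huv : ∀ x, u x ≤ v x) (hg : AEMeasurable g μ)
    (hmain : ∀ n : ℤ, ∀ C ∈ F.part n,
      ∫ x in C, max (u x - ⨍ y in C, v y ∂μ) 0 ∂μ ≤ ∫ x in C, g x ∂μ) (hp : 1 < p) :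
    ∫⁻ x, ENNReal.ofReal (u x ^ p) ∂μ ≤ ENNReal.ofReal (p * 2 / (p - 1) * (2 * N₀) ^ (p - 1)) *
      ∫⁻ x, ‖g x‖ₑ * ENNReal.ofReal ((F.maximal v x).toReal ^ (p - 1)) ∂μ := by
  have hN₀0 : 0 < 2 * N₀ := by linarith
  refine (lintegral_rpow_le_of_measure_lt_le hu.aemeasurable hu0
    ((F.measurable_maximal v).ennreal_toReal.aemeasurable.const_mul (2 * N₀))
    (fun x => mul_nonneg hN₀0.le ENNReal.toReal_nonneg) hg.enorm zero_le_two hp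
    fun t ht => ?_).trans_eq ?_
  · have hlevel : {x | ENNReal.ofReal (t / (2 * N₀)) < F.maximal v x} ≤ᵐ[μ]
        {x | t < 2 * N₀ * (F.maximal v x).toReal} := by
      filter_upwards [F.ae_maximal_lt_top hv hv0] with x hx hlt
      have := (ENNReal.ofReal_lt_iff_lt_toReal (by positivity) hx.ne).1 hlt
      rwa [div_lt_iff₀' hN₀0] at this
    calc μ {x | t < u x} ≤ _ := F.measure_lt_le_lintegral_maximal hN₀ hu hv hv0 huv hmain ht
      _ ≤ _ := by
        rw [inv_div, div_eq_mul_inv]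
        gcongr 1
        exact lintegral_mono_set' hlevel
  · rw [ENNReal.ofReal_mul (by positivity), mul_assoc]
    congr 1
    rw [← lintegral_const_mul' _ _ ENNReal.ofReal_ne_top]
    refine lintegral_congr fun x => ?_
    rw [Real.mul_rpow hN₀0.le ENNReal.toReal_nonneg, ENNReal.ofReal_mul (by positivity)]
    ring

end SFinite

end FiltrationOfPartitions

theorem stmt4 (p N₀ : ℝ) (hp : 1 < p) (hN₀ : 1 ≤ N₀) :
    ∃ N : ℝ, 0 < N ∧
    ∀ (Ω : Type) [MeasurableSpace Ω] (μ : Measure Ω) [SigmaFinite μ],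
      μ Set.univ = ⊤ →
      ∀ (F : FiltrationOfPartitions Ω μ N₀) (u v g : Ω → ℝ),
        Integrable u μ → Integrable v μ →
        (∀ x, 0 ≤ g x) → Measurable g →
        (∀ x, 0 ≤ u x) → (∀ x, u x ≤ v x) →
        (∀ n : ℤ, ∀ C ∈ F.part n,
          ∫ x in C, max (u x - ⨍ y in C, v y ∂μ) 0 ∂μ ≤ ∫ x in C, g x ∂μ) →
        eLpNorm u (ENNReal.ofReal p) μ ^ p ≤
          ENNReal.ofReal N * eLpNorm g (ENNReal.ofReal p) μ *
            eLpNorm v (ENNReal.ofReal p) μ ^ (p - 1) := by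
  have hp0 : 0 < p := by linarith
  have hp1 : 0 < p - 1 := by linarith
  set c₁ := p * 2 / (p - 1) * (2 * N₀) ^ (p - 1)
  set c₂ := p * 2 / (p - 1) * 2 ^ (p - 1)
  have hc₁ : 0 < c₁ := by positivity
  have hc₂ : 0 < c₂ := by positivity
  refine ⟨c₁ * c₂ ^ ((p - 1) / p), by positivity, ?_⟩
  intro Ω _ μ _ _ F u v g hu hv _ hg hu0 huv hmain
  have hv0 : ∀ x, 0 ≤ v x := fun x => (hu0 x).trans (huv x)
  calc eLpNorm u (ENNReal.ofReal p) μ ^ p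
      = ∫⁻ x, ENNReal.ofReal (u x ^ p) ∂μ := eLpNorm_ofReal_rpow_eq_lintegral hp0 hu0
    _ ≤ ENNReal.ofReal c₁ *
          ∫⁻ x, ‖g x‖ₑ * ENNReal.ofReal ((F.maximal v x).toReal ^ (p - 1)) ∂μ :=
        F.lintegral_rpow_le_lintegral_enorm_mul_maximal hN₀ hu hu0 hv hv0 huv hg.aemeasurable
          hmain hp
    _ ≤ ENNReal.ofReal c₁ * (eLpNorm g (ENNReal.ofReal p) μ *
          (∫⁻ x, ENNReal.ofReal ((F.maximal v x).toReal ^ p) ∂μ) ^ ((p - 1) / p)) := by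
        gcongr
        exact lintegral_enorm_mul_rpow_le hg.aemeasurable
          (F.measurable_maximal v).ennreal_toReal.aemeasurable (fun _ => ENNReal.toReal_nonneg) hp
    _ ≤ ENNReal.ofReal c₁ * (eLpNorm g (ENNReal.ofReal p) μ *
          (ENNReal.ofReal c₂ * eLpNorm v (ENNReal.ofReal p) μ ^ p) ^ ((p - 1) / p)) := by
        rw [eLpNorm_ofReal_rpow_eq_lintegral hp0 hv0]
        gcongr
        exact F.lintegral_maximal_rpow_le hv hv0 hp
    _ = ENNReal.ofReal (c₁ * c₂ ^ ((p - 1) / p)) * eLpNorm g (ENNReal.ofReal p) μ *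
          eLpNorm v (ENNReal.ofReal p) μ ^ (p - 1) := by
        rw [ENNReal.mul_rpow_of_nonneg _ _ (by positivity), ← ENNReal.rpow_mul,
          mul_div_cancel₀ _ hp0.ne', ENNReal.ofReal_mul hc₁.le,
          ENNReal.ofReal_rpow_of_nonneg hc₂.le (by positivity)]
        ring
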